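/- arXiv:1706.08469 — 3 statements merged into one kernel-verified Lean document; each statement's English description precedes it below -/
import Mathlib

section
/- For all nonnegative integers r and n, F_{3rn} * L_{3rn+3r} = F_{rn} * L_{rn+r} * (5 * L_{rn} * F_{rn+r} * F_{2rn+r} + L_{2r} + (-1)^r). -/
open Finset

def L : ℕ → ℤ
  | 0 => 2
  | 1 => 1
  | n + 2 => L (n + 1) + L n

def F (n : ℕ) : ℤ := Nat.fib n

lemma F_add_two (a : ℕ) : F (a + 2) = F (a + 1) + F a := by
  unfold F; rw [Nat.fib_add_two]; push_cast; ring

lemma two_mul_F_succ (a : ℕ) : 2 * F (a + 1) = F a + L a := by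
  induction a using Nat.twoStepInduction with
  | zero => simp [F, L]
  | one => simp [F, L]
  | more a ih1 ih2 =>
    have h1 := F_add_two (a + 1)
    have h2 := F_add_two a
    have h3 : L (a + 2) = L (a + 1) + L a := rfl
    linarith

lemma two_mul_L_succ (a : ℕ) : 2 * L (a + 1) = L a + 5 * F a := by
  induction a using Nat.twoStepInduction with
  | zero => simp [F, L]
  | one => show 2 * (L 1 + L 0) = L 1 + 5 * F 1; simp [F, L]
  | more a ih1 ih2 =>
    have h1 := F_add_two a
    have h2 : L (a + 2) = L (a + 1) + L a := rfl
    have h3 : L (a + 3) = L (a + 2) + L (a + 1) := rfl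
    linarith

lemma addF (a b : ℕ) : 2 * F (a + b) = F a * L b + L a * F b := by
  induction b using Nat.twoStepInduction with
  | zero => show 2 * F a = F a * L 0 + L a * F 0; simp [F, L]; ring
  | one =>
    show 2 * F (a + 1) = F a * L 1 + L a * F 1
    have := two_mul_F_succ a
    simp only [F, L, Nat.fib_one] at *; push_cast at *; linarith
  | more b ih1 ih2 =>
    have h1 : a + (b + 2) = (a + b) + 2 := by ring
    have h2 : a + (b + 1) = (a + b) + 1 := by ring
    rw [h1, F_add_two (a + b)]
    rw [h2] at ih2
    have h3 : L (b + 2) = L (b + 1) + L b := rfl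
    have h4 := F_add_two b
    rw [h3, h4]; linarith

lemma addL (a b : ℕ) : 2 * L (a + b) = L a * L b + 5 * F a * F b := by
  induction b using Nat.twoStepInduction with
  | zero => show 2 * L a = L a * L 0 + 5 * F a * F 0; simp [F, L]; ring
  | one =>
    show 2 * L (a + 1) = L a * L 1 + 5 * F a * F 1
    have := two_mul_L_succ a
    simp only [F, L, Nat.fib_one] at *; push_cast at *; linarith
  | more b ih1 ih2 =>
    have h1 : a + (b + 2) = (a + b) + 2 := by ring
    have h2 : a + (b + 1) = (a + b) + 1 := by ring
    rw [h1]
    have h0 : L ((a + b) + 2) = L ((a + b) + 1) + L (a + b) := rfl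
    rw [h0]
    rw [h2] at ih2
    have h3 : L (b + 2) = L (b + 1) + L b := rfl
    have h4 := F_add_two b
    rw [h3, h4]; linarith

lemma cassini (a : ℕ) : F (a + 1) ^ 2 = F a * F (a + 2) + (-1 : ℤ) ^ a := by
  induction a with
  | zero => simp [F]
  | succ a ih =>
    have h1 := F_add_two a
    have h2 := F_add_two (a + 1)
    rw [h2, h1]
    rw [h1] at ih
    linear_combination (-1 : ℤ) * ih

lemma sqL (a : ℕ) : L a ^ 2 = 5 * F a ^ 2 + 4 * (-1 : ℤ) ^ a := by
  cases a with
  | zero => simp [F, L]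
  | succ a =>
    have hM : L (a + 1) = F (a + 1) + 2 * F a := by
      have h1 := two_mul_F_succ (a + 1)
      have h2 := F_add_two a
      linarith
    have hcas := cassini a
    rw [F_add_two a] at hcas
    rw [hM]
    linear_combination (-4 : ℤ) * hcas

lemma F2 (a : ℕ) : F (2 * a) = F a * L a := by
  have h := addF a a
  rw [two_mul a]; linarith

lemma L2 (a : ℕ) : L (2 * a) = 5 * F a ^ 2 + 2 * (-1 : ℤ) ^ a := by
  have h := addL a a
  have h2 := sqL a
  have key : 2 * L (a + a) = 2 * (5 * F a ^ 2 + 2 * (-1 : ℤ) ^ a) := by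
    linear_combination h + h2
  rw [two_mul a]; linarith

lemma F3 (a : ℕ) : F (3 * a) = 5 * F a ^ 3 + 3 * F a * (-1 : ℤ) ^ a := by
  have hi : 3 * a = a + 2 * a := by ring
  have h1 := addF a (2 * a)
  have h2 := F2 a
  have h3 := L2 a
  have h4 := sqL a
  have key : 2 * F (a + 2 * a) = 2 * (5 * F a ^ 3 + 3 * F a * (-1 : ℤ) ^ a) := by
    linear_combination h1 + F a * h3 + L a * h2 + F a * h4
  rw [hi]; linarith

lemma L3 (a : ℕ) : L (3 * a) = L a * (5 * F a ^ 2 + (-1 : ℤ) ^ a) := by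
  have hi : 3 * a = a + 2 * a := by ring
  have h1 := addL a (2 * a)
  have h2 := F2 a
  have h3 := L2 a
  have key : 2 * L (a + 2 * a) = 2 * (L a * (5 * F a ^ 2 + (-1 : ℤ) ^ a)) := by
    linear_combination h1 + L a * h3 + 5 * F a * h2
  rw [hi]; linarith

theorem stmt7 (r n : ℕ) :
    F (3 * r * n) * L (3 * r * n + 3 * r) =
      F (r * n) * L (r * n + r) *
        (5 * L (r * n) * F (r * n + r) * F (2 * r * n + r) + L (2 * r) + (-1 : ℤ) ^ r) := by
  have i2 : 3 * r * n + 3 * r = 3 * (r * n + r) := by ring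
  have i1 : 3 * r * n = 3 * (r * n) := by ring
  have i3 : 2 * r * n + r = 2 * (r * n) + r := by ring
  rw [i2, i1, i3]
  have hF3 := F3 (r * n)
  have hL3 := L3 (r * n + r)
  rw [pow_add] at hL3
  have hL2 := L2 r
  have hB := addF (r * n) r
  have hC : 2 * F (2 * (r * n) + r) =
      F (r * n) * L (r * n) * L r + 5 * F (r * n) ^ 2 * F r
        + 2 * (-1 : ℤ) ^ (r * n) * F r := by
    have h := addF (2 * (r * n)) r
    rw [F2 (r * n), L2 (r * n)] at h
    linear_combination h
  have hl := sqL (r * n)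
  have hh := sqL r
  have he : ((-1 : ℤ) ^ (r * n)) ^ 2 = 1 := by
    rw [← pow_mul, mul_comm, pow_mul]; norm_num
  have key : 4 * (F (3 * (r * n)) * L (3 * (r * n + r))) =
      4 * (F (r * n) * L (r * n + r) *
        (5 * L (r * n) * F (r * n + r) * F (2 * (r * n) + r) + L (2 * r) + (-1 : ℤ) ^ r)) := by
    rw [hF3, hL3, hL2]
    set f := F (r * n)
    set l := L (r * n)
    set g := F r
    set h := L r
    set e := (-1 : ℤ) ^ (r * n)
    set d := (-1 : ℤ) ^ r
    set B := F (r * n + r)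
    set C := F (2 * (r * n) + r)
    set P := L (r * n + r)
    linear_combination
      (30*f*e*B*P - 10*f*l*C*P + 15*f*l*g*e*P + 15*f^2*h*e*P + 50*f^3*B*P
        + 25*f^3*l*g*P + 25*f^4*h*P) * hB
      + (-5*f*l^2*g*P - 5*f^2*l*h*P) * hC
      + (5*f*g^2*e*P - 5*f^2*l*g*h*P - 5*f^3*h^2*P) * hl
      + (-5*f^3*e*P) * hh
      + (12*f*d*P + 20*f*g^2*P) * he
  linarith
end

section
/- For all nonnegative integers r and n, L_{3rn} * F_{3rn+3r} = L_{rn} * F_{rn+r} * (5*F_{2rn+r}^2 - (-1)^{nr} * 5*F_{rn+r}^2 + (-1)^{(n-1)r} * 5*F_{rn}^2 + 5*F_r^2 + (-1)^r * 3). -/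
open Finset

lemma Fadd1 (m n : ℕ) : F (m + n + 1) = F m * F n + F (m + 1) * F (n + 1) := by
  unfold F
  push_cast [Nat.fib_add]
  ring

lemma Fstep (m : ℕ) : F (m + 2) = F (m + 1) + F m := by
  unfold F
  push_cast [Nat.fib_add_two]
  ring

lemma Fadd (m n : ℕ) : F (m + n) = F m * F (n + 1) + F (m + 1) * F n - F m * F n := by
  cases n with
  | zero => simp [F]
  | succ k =>
    have h1 := Fadd1 m k
    have h2 := Fstep k
    have : m + (k + 1) = m + k + 1 := by ring
    rw [this, h1, h2]
    ring

lemma sgn (m : ℕ) : ((-1 : ℤ)) ^ m = F (m + 1) ^ 2 - F m * F (m + 1) - F m ^ 2 := by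
  induction m with
  | zero => simp [F]
  | succ k ih =>
    rw [pow_succ, ih, Fstep k]
    ring

lemma Lfib : ∀ m, L m = 2 * F (m + 1) - F m := by
  intro m
  induction m using Nat.twoStepInduction with
  | zero => simp [L, F]
  | one => simp [L, F]
  | more k ih1 ih2 =>
    show L (k + 2) = _
    rw [L, ih1, ih2, Fstep (k + 1), Fstep k]
    ring

lemma key (a b : ℕ) :
    L (3 * a) * F (3 * a + 3 * b) =
      L a * F (a + b) *
        (5 * F (2 * a + b) ^ 2 - (-1 : ℤ) ^ a * 5 * F (a + b) ^ 2 +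
          (-1 : ℤ) ^ (a + b) * 5 * F a ^ 2 + 5 * F b ^ 2 + (-1 : ℤ) ^ b * 3) := by
  have e2a : F (2 * a) = F a * F (a + 1) + F (a + 1) * F a - F a * F a := by
    rw [two_mul]; exact Fadd a a
  have e2a1 : F (2 * a + 1) = F a * F a + F (a + 1) * F (a + 1) := by
    rw [two_mul]; exact Fadd1 a a
  have i3a : 3 * a = 2 * a + a := by ring
  have e3a : F (3 * a) = F (2 * a) * F (a + 1) + F (2 * a + 1) * F a - F (2 * a) * F a := by
    rw [i3a]; exact Fadd (2 * a) a
  have e3a1 : F (3 * a + 1) = F (2 * a) * F a + F (2 * a + 1) * F (a + 1) := by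
    rw [i3a]; exact Fadd1 (2 * a) a
  have e2b : F (2 * b) = F b * F (b + 1) + F (b + 1) * F b - F b * F b := by
    rw [two_mul]; exact Fadd b b
  have e2b1 : F (2 * b + 1) = F b * F b + F (b + 1) * F (b + 1) := by
    rw [two_mul]; exact Fadd1 b b
  have i3b : 3 * b = 2 * b + b := by ring
  have e3b : F (3 * b) = F (2 * b) * F (b + 1) + F (2 * b + 1) * F b - F (2 * b) * F b := by
    rw [i3b]; exact Fadd (2 * b) b
  have e3b1 : F (3 * b + 1) = F (2 * b) * F b + F (2 * b + 1) * F (b + 1) := by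
    rw [i3b]; exact Fadd1 (2 * b) b
  have eab : F (a + b) = F a * F (b + 1) + F (a + 1) * F b - F a * F b := Fadd a b
  have e2ab : F (2 * a + b) =
      F (2 * a) * F (b + 1) + F (2 * a + 1) * F b - F (2 * a) * F b := Fadd (2 * a) b
  have e3ab : F (3 * a + 3 * b) =
      F (3 * a) * F (3 * b + 1) + F (3 * a + 1) * F (3 * b) - F (3 * a) * F (3 * b) :=
    Fadd (3 * a) (3 * b)
  have hsa : (F (a + 1) ^ 2 - F a * F (a + 1) - F a ^ 2) ^ 2 = 1 := by
    rw [← sgn a, ← pow_mul, mul_comm, pow_mul]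
    norm_num
  set p := F a
  set q := F (a + 1)
  set s := F b
  set t := F (b + 1)
  rw [Lfib, Lfib, e3ab, e3a, e3a1, e3b, e3b1, e2ab, e2a, e2a1, e2b, e2b1, eab,
    pow_add, sgn a, sgn b]
  linear_combination (13 * p * q * s ^ 2 * t + 6 * p * q * t ^ 3 - 15 * p * q * s * t ^ 2 +
      4 * q ^ 2 * s ^ 3 + 6 * q ^ 2 * s * t ^ 2 - 6 * q ^ 2 * s ^ 2 * t - 6 * p * q * s ^ 3 -
      5 * p ^ 2 * s ^ 2 * t - 3 * p ^ 2 * t ^ 3 + 6 * p ^ 2 * s * t ^ 2 + 2 * p ^ 2 * s ^ 3) * hsa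

theorem stmt10 (r n : ℕ) :
    L (3 * r * n) * F (3 * r * n + 3 * r) =
      L (r * n) * F (r * n + r) *
        (5 * F (2 * r * n + r) ^ 2 - (-1 : ℤ) ^ (n * r) * 5 * F (r * n + r) ^ 2 +
          (-1 : ℤ) ^ ((n + 1) * r) * 5 * F (r * n) ^ 2 + 5 * F r ^ 2 + (-1 : ℤ) ^ r * 3) := by
  have i1 : 3 * r * n = 3 * (r * n) := by ring
  have i2 : 2 * r * n = 2 * (r * n) := by ring
  have i3 : n * r = r * n := by ring
  have i4 : (n + 1) * r = r * n + r := by ring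
  rw [i1, i2, i3, i4]
  exact key (r * n) r
end

section
/- For all positive integers r and n with r odd: if n is even then L_{3r} * (∑_{k=1}^n F_{2rk}^3) = F_{rn}^2 * L_{rn+r}^2 * (L_{rn} * F_{rn+r} + F_r), and if n is odd then L_{3r} * (∑_{k=1}^n F_{2rk}^3) = L_{rn}^2 * F_{rn+r}^2 * (F_{rn} * L_{rn+r} + F_r). -/
/-!
For odd `r` both right-hand sides equal `P (F (2rn + r))` with `P x = (x - F r)² (x + 2 F r)`,
because `F m L (m + r) = F (2m + r) - (-1)^m F r` and `F (m + r) L m = F (2m + r) + (-1)^m F r`.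
The sum then telescopes: for odd `b`, writing `y = F (b + 2r)` and `z = F b`,
`P y - P z = (y - z) ((y - z)² + 3 (y z - F r²))`, where `y - z = L r F (b + r)` and, by Catalan's
identity, `y z - F r² = F (b + r)²`; so `P y - P z = L r (L r² + 3) F (b + r)³ = L (3r) F (b + r)³`.
The Fibonacci–Lucas identities are checked through Binet's formulas.
-/

open Finset

open Real goldenRatio

lemma coe_F_eq (n : ℕ) : (F n : ℝ) = (φ ^ n - ψ ^ n) / √5 := by
  simp [F, coe_fib_eq]

lemma coe_L_eq (n : ℕ) : (L n : ℝ) = φ ^ n + ψ ^ n := by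
  induction n using Nat.twoStepInduction with
  | zero => norm_num [L]
  | one => simp [L, goldenRatio_add_goldenConj]
  | more n ih1 ih2 =>
    push_cast [L, ih1, ih2]
    linear_combination -φ ^ n * goldenRatio_sq - ψ ^ n * goldenConj_sq

lemma neg_one_pow_eq_goldenRatio_pow_mul_goldenConj_pow (n : ℕ) :
    (-1 : ℝ) ^ n = φ ^ n * ψ ^ n := by
  rw [← mul_pow, goldenRatio_mul_goldenConj]

lemma F_add_mul_L (b c : ℕ) : F (b + c) * L b = F (2 * b + c) + (-1) ^ b * F c := by
  apply Int.cast_injective (α := ℝ)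
  push_cast
  simp only [coe_F_eq, coe_L_eq, neg_one_pow_eq_goldenRatio_pow_mul_goldenConj_pow]
  ring

lemma F_mul_L_add (b c : ℕ) : F b * L (b + c) = F (2 * b + c) - (-1) ^ b * F c := by
  apply Int.cast_injective (α := ℝ)
  push_cast
  simp only [coe_F_eq, coe_L_eq, neg_one_pow_eq_goldenRatio_pow_mul_goldenConj_pow]
  ring

lemma F_add_sq_sub_mul (b r : ℕ) :
    F (b + r) ^ 2 - F (b + 2 * r) * F b = (-1) ^ b * F r ^ 2 := by
  apply Int.cast_injective (α := ℝ)
  push_cast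
  simp only [coe_F_eq, neg_one_pow_eq_goldenRatio_pow_mul_goldenConj_pow]
  ring

lemma L_three_mul (r : ℕ) : L (3 * r) = L r ^ 3 - 3 * (-1) ^ r * L r := by
  apply Int.cast_injective (α := ℝ)
  push_cast
  simp only [coe_L_eq, neg_one_pow_eq_goldenRatio_pow_mul_goldenConj_pow]
  ring

lemma F_add_two_mul_sub (b r : ℕ) (hr : Odd r) : F (b + 2 * r) - F b = L r * F (b + r) := by
  have h := F_add_mul_L r b
  rw [hr.neg_one_pow, add_comm r b, add_comm (2 * r) b] at h
  linear_combination -h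

lemma L_three_mul_mul_F_pow_three (b r : ℕ) (hb : Odd b) (hr : Odd r) :
    L (3 * r) * F (b + r) ^ 3 =
      (F (b + 2 * r) - F r) ^ 2 * (F (b + 2 * r) + 2 * F r) -
        (F b - F r) ^ 2 * (F b + 2 * F r) := by
  have hprod := F_add_sq_sub_mul b r
  have hL := L_three_mul r
  rw [hb.neg_one_pow] at hprod
  rw [hr.neg_one_pow] at hL
  rw [eq_add_of_sub_eq' (F_add_two_mul_sub b r hr)] at hprod ⊢
  linear_combination F (b + r) ^ 3 * hL + 3 * L r * F (b + r) * hprod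

lemma L_three_mul_mul_sum_F_pow_three (r n : ℕ) (hr : Odd r) :
    L (3 * r) * ∑ k ∈ Icc 1 n, F (2 * r * k) ^ 3 =
      (F (2 * r * n + r) - F r) ^ 2 * (F (2 * r * n + r) + 2 * F r) := by
  induction n with
  | zero => simp
  | succ n ih =>
    have hodd : Odd (2 * r * n + r) := ((even_two.mul_right r).mul_right n).add_odd hr
    have hstep := L_three_mul_mul_F_pow_three _ r hodd hr
    rw [show 2 * r * n + r + r = 2 * r * (n + 1) by ring,
      show 2 * r * n + r + 2 * r = 2 * r * (n + 1) + r by ring] at hstep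
    rw [sum_Icc_succ_top (by omega), mul_add, ih, hstep]
    ring

theorem stmt14_general (r n : ℕ) (hro : Odd r) :
    (Even n → L (3 * r) * ∑ k ∈ Finset.Icc 1 n, F (2 * r * k) ^ 3 =
      F (r * n) ^ 2 * L (r * n + r) ^ 2 * (L (r * n) * F (r * n + r) + F r)) ∧
    (Odd n → L (3 * r) * ∑ k ∈ Finset.Icc 1 n, F (2 * r * k) ^ 3 =
      L (r * n) ^ 2 * F (r * n + r) ^ 2 * (F (r * n) * L (r * n + r) + F r)) := by
  have hFL := F_mul_L_add (r * n) r
  have hLF := F_add_mul_L (r * n) r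
  rw [L_three_mul_mul_sum_F_pow_three r n hro, show 2 * r * n + r = 2 * (r * n) + r by ring]
  constructor
  · intro hn
    rw [(hn.mul_left r).neg_one_pow] at hFL hLF
    rw [← mul_pow, hFL, mul_comm (L _), hLF]
    ring
  · intro hn
    rw [(hro.mul hn).neg_one_pow] at hFL hLF
    rw [← mul_pow, mul_comm (L _), hLF, hFL]
    ring

theorem stmt14 (r n : ℕ) (hr : 0 < r) (hn : 0 < n) (hro : Odd r) :
    (Even n → L (3 * r) * ∑ k ∈ Finset.Icc 1 n, F (2 * r * k) ^ 3 =
      F (r * n) ^ 2 * L (r * n + r) ^ 2 * (L (r * n) * F (r * n + r) + F r)) ∧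
    (Odd n → L (3 * r) * ∑ k ∈ Finset.Icc 1 n, F (2 * r * k) ^ 3 =
      L (r * n) ^ 2 * F (r * n + r) ^ 2 * (F (r * n) * L (r * n + r) + F r)) :=
  stmt14_general r n hro
end
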